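/- arXiv:1205.1556 — 2 statements merged into one kernel-verified Lean document; each statement's English description precedes it below -/
import Mathlib

section
/- Let v > 3√2/4, a > 0, b > 0, c ≥ 0, and define F : (0, π/2) → ℝ by F(x) = a·(1 − v·sin x)/cos x + b·(1 − v·cos x)/sin x + c. Then F attains no local minimum in (0, π/2); equivalently, for every x₀ ∈ (0, π/2) there exist points arbitrarily close to x₀ where F takes strictly smaller values, unless x₀ is the unique global maximizer. -/
/-!
At a critical point `x` of `F` the relation `F'(x) = 0` expresses `b` through `a`, and substituting
it turns `F''(x)` into a positive multiple of
`sin x (v - cos x)(1 + sin² x - 2v sin x) + cos x (v - sin x)(1 + cos² x - 2v cos x)`.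
With `t = sin x + cos x ∈ (1, √2]` this is half of `ψ(t) = v t (3 + t²) - 3t² + 3 - 4v²`, which is
increasing in `t` (as `v > 1`) and satisfies `ψ(√2) = -(4v - 3√2)(v - √2/2)`; so `v > 3√2/4` makes
`F''` negative at every critical point, and the second derivative test rules out a local minimum.
-/

open Real Filter Set Topology

theorem IsLocalMin.deriv_deriv_nonneg {f : ℝ → ℝ} {x₀ : ℝ} (h : IsLocalMin f x₀)
    (hc : ContinuousAt f x₀) : 0 ≤ deriv (deriv f) x₀ := by
  by_contra! hneg
  have hconst : f =ᶠ[𝓝 x₀] fun _ => f x₀ :=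
    (h.and (isLocalMax_of_deriv_deriv_neg hneg h.deriv_eq_zero hc)).mono
      fun _ hy => le_antisymm hy.2 hy.1
  have hderiv : deriv f =ᶠ[𝓝 x₀] fun _ => 0 :=
    hconst.eventuallyEq_nhds.mono fun _ hy => by simp [hy.deriv_eq]
  simp [hderiv.deriv_eq] at hneg

lemma one_lt_of_three_sqrt_two_div_four_lt {v : ℝ} (hv : 3 * √2 / 4 < v) : 1 < v := by
  nlinarith [sq_sqrt (zero_le_two : (0 : ℝ) ≤ 2), sqrt_nonneg 2]

lemma cubic_neg_of_one_lt_of_sq_le_two {v t : ℝ} (hv : 3 * √2 / 4 < v) (ht : 1 < t)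
    (ht2 : t ^ 2 ≤ 2) : v * t * (3 + t ^ 2) - 3 * t ^ 2 + 3 - 4 * v ^ 2 < 0 := by
  set r := √2
  have hr2 : r ^ 2 = 2 := sq_sqrt zero_le_two
  have hr : r < 3 / 2 := by nlinarith [sqrt_nonneg 2]
  have htr : t ≤ r := by nlinarith [sqrt_nonneg 2]
  have hmono : 0 ≤ v * (5 + r * t + t ^ 2) - 3 * (r + t) := by
    nlinarith [mul_nonneg (by linarith [one_lt_of_three_sqrt_two_div_four_lt hv] : 0 ≤ v - 1)
        (by positivity : 0 ≤ 5 + r * t + t ^ 2),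
      mul_nonneg (by linarith : 0 ≤ t - 1) (by linarith : 0 ≤ t + r - 1)]
  calc v * t * (3 + t ^ 2) - 3 * t ^ 2 + 3 - 4 * v ^ 2
      = -(4 * v - 3 * r) * (v - r / 2) - (r - t) * (v * (5 + r * t + t ^ 2) - 3 * (r + t)) := by
        linear_combination (v * t - 3 / 2) * hr2
    _ < 0 := by nlinarith [mul_nonneg (sub_nonneg.2 htr) hmono]

lemma second_deriv_numerator_neg {v s c : ℝ} (hv : 3 * √2 / 4 < v) (hs : 0 < s) (hc : 0 < c)
    (hsc : s ^ 2 + c ^ 2 = 1) :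
    s * (v - c) * (1 + s ^ 2 - 2 * v * s) + c * (v - s) * (1 + c ^ 2 - 2 * v * c) < 0 := by
  have hψ := cubic_neg_of_one_lt_of_sq_le_two hv (t := s + c)
    (by nlinarith [mul_pos hs hc]) (by nlinarith [sq_nonneg (s - c)])
  linear_combination hψ / 2 + (3 / 2 - 2 * v ^ 2 + v * c / 2 + v * s / 2 - s * c) * hsc

lemma second_deriv_neg_of_deriv_eq_zero {v a b s c : ℝ} (hv : 3 * √2 / 4 < v) (ha : 0 < a)
    (hs : 0 < s) (hc : 0 < c) (hsc : s ^ 2 + c ^ 2 = 1)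
    (hcrit : a * (s - v) / c ^ 2 + b * (v - c) / s ^ 2 = 0) :
    a * (1 + s ^ 2 - 2 * v * s) / c ^ 3 + b * (1 + c ^ 2 - 2 * v * c) / s ^ 3 < 0 := by
  have hvc : 0 < v - c := by
    nlinarith [one_lt_of_three_sqrt_two_div_four_lt hv, sq_nonneg s]
  have hb : b * (v - c) * c ^ 2 = a * (v - s) * s ^ 2 := by
    field_simp at hcrit
    linarith
  have hsecond : a * (1 + s ^ 2 - 2 * v * s) / c ^ 3 + b * (1 + c ^ 2 - 2 * v * c) / s ^ 3
      = a * s ^ 2 / ((v - c) * s ^ 3 * c ^ 3) *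
        (s * (v - c) * (1 + s ^ 2 - 2 * v * s) + c * (v - s) * (1 + c ^ 2 - 2 * v * c)) := by
    field_simp
    linear_combination (c * (1 + c ^ 2 - 2 * v * c)) * hb
  rw [hsecond]
  exact mul_neg_of_pos_of_neg (by positivity) (second_deriv_numerator_neg hv hs hc hsc)

section Derivatives

variable (v a b : ℝ) {x : ℝ}

lemma hasDerivAt_cost (k : ℝ) (hs : sin x ≠ 0) (hc : cos x ≠ 0) :
    HasDerivAt (fun y => a * (1 - v * sin y) / cos y + b * (1 - v * cos y) / sin y + k)
      (a * (sin x - v) / cos x ^ 2 + b * (v - cos x) / sin x ^ 2) x := by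
  have hp := sin_sq_add_cos_sq x
  refine (((((((hasDerivAt_sin x).const_mul v).const_sub 1).const_mul a).div
    (hasDerivAt_cos x) hc).add
    (((((hasDerivAt_cos x).const_mul v).const_sub 1).const_mul b).div
    (hasDerivAt_sin x) hs)).add_const k).congr_deriv ?_
  field_simp
  linear_combination (-v * (a * sin x ^ 2 - b * cos x ^ 2)) * hp

lemma hasDerivAt_cost_deriv (hs : sin x ≠ 0) (hc : cos x ≠ 0) :
    HasDerivAt (fun y => a * (sin y - v) / cos y ^ 2 + b * (v - cos y) / sin y ^ 2)
      (a * (1 + sin x ^ 2 - 2 * v * sin x) / cos x ^ 3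
        + b * (1 + cos x ^ 2 - 2 * v * cos x) / sin x ^ 3) x := by
  have hp := sin_sq_add_cos_sq x
  refine (((((hasDerivAt_sin x).sub_const v).const_mul a).div
    ((hasDerivAt_cos x).pow 2) (pow_ne_zero 2 hc)).add
    ((((hasDerivAt_cos x).const_sub v).const_mul b).div
    ((hasDerivAt_sin x).pow 2) (pow_ne_zero 2 hs))).congr_deriv ?_
  simp only [Pi.pow_apply]
  field_simp
  linear_combination (sin x * cos x * (a * sin x ^ 3 + b * cos x ^ 3)) * hp

end Derivatives

theorem F_no_local_min_general (v a b c : ℝ) (hv : 3 * Real.sqrt 2 / 4 < v)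
    (ha : 0 < a) :
    ¬ ∃ x ∈ Set.Ioo 0 (π/2), IsLocalMin
      (fun x => a * (1 - v * sin x) / cos x + b * (1 - v * cos x) / sin x + c)
      x := by
  rintro ⟨x, hx, hmin⟩
  have hsin : ∀ y ∈ Ioo 0 (π / 2), 0 < sin y := fun y hy =>
    sin_pos_of_mem_Ioo ⟨hy.1, hy.2.trans (half_lt_self pi_pos)⟩
  have hcos : ∀ y ∈ Ioo 0 (π / 2), 0 < cos y := fun y hy =>
    cos_pos_of_mem_Ioo ⟨(neg_neg_of_pos (half_pos pi_pos)).trans hy.1, hy.2⟩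
  have hderiv : deriv (fun y => a * (1 - v * sin y) / cos y + b * (1 - v * cos y) / sin y + c)
      =ᶠ[𝓝 x] fun y => a * (sin y - v) / cos y ^ 2 + b * (v - cos y) / sin y ^ 2 :=
    (isOpen_Ioo.eventually_mem hx).mono fun y hy =>
      (hasDerivAt_cost v a b c (hsin y hy).ne' (hcos y hy).ne').deriv
  have hcrit := hderiv.self_of_nhds ▸ hmin.deriv_eq_zero
  have hsecond := hmin.deriv_deriv_nonneg
    (hasDerivAt_cost v a b c (hsin x hx).ne' (hcos x hx).ne').continuousAt
  rw [hderiv.deriv_eq, (hasDerivAt_cost_deriv v a b (hsin x hx).ne' (hcos x hx).ne').deriv]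
    at hsecond
  exact hsecond.not_gt <| second_deriv_neg_of_deriv_eq_zero hv ha (hsin x hx) (hcos x hx)
    (sin_sq_add_cos_sq x) hcrit

theorem F_no_local_min (v a b c : ℝ) (hv : 3 * Real.sqrt 2 / 4 < v)
    (ha : 0 < a) (hb : 0 < b) (hc : 0 ≤ c) :
    ¬ ∃ x ∈ Set.Ioo 0 (π/2), IsLocalMin
      (fun x => a * (1 - v * sin x) / cos x + b * (1 - v * cos x) / sin x + c)
      x :=
  F_no_local_min_general v a b c hv ha
end

section
/- Let v > 3√2/4. Define I : (0, π/2) → ℝ by I(x) = 2(v − sin x)(v − cos x) + sin x · cos x · (1 − √2·v). Then I(x) > 0 for all x ∈ (0, π/2). -/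
/-!
Write `k = √2`, `t = sin x + cos x`, so that `sin x * cos x = (t² - 1) / 2` and `|t| ≤ k`. The expression
becomes a quadratic `q(t)` in `t` with `q(k) = 2 (v - 3k/4) (v - k/2) > 0`, and
`q(t) = q(k) + (k - t) Q(t)` where `Q(t) > 0` for `|t| ≤ k` because `k v > 3/2`.
-/

open Real

lemma quadratic_pos_of_abs_le_sqrt_two {v t : ℝ} (hv : 3 * √2 / 4 < v) (ht : |t| ≤ √2) :
    0 < 2 * v ^ 2 - 2 * v * t + (t ^ 2 - 1) / 2 * (3 - √2 * v) := by
  set k := √2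
  have hk : k ^ 2 = 2 := sq_sqrt zero_le_two
  obtain ⟨htk₁, htk₂⟩ := abs_le.mp ht
  have hkv : 3 / 2 < k * v := by nlinarith
  have hq_k : 0 < 2 * (v - 3 * k / 4) * (v - k / 2) := by
    apply mul_pos <;> nlinarith
  have hQ : 0 < (t + k) * (k * v - 3 / 2) / 2 + (2 * v - 3 * (t + k) / 4) := by
    have : 0 ≤ (t + k) * (k * v - 3 / 2) := mul_nonneg (by linarith) (by linarith)
    linarith
  calc 0 < 2 * (v - 3 * k / 4) * (v - k / 2)
        + (k - t) * ((t + k) * (k * v - 3 / 2) / 2 + (2 * v - 3 * (t + k) / 4)) := by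
        linarith [mul_nonneg (sub_nonneg.mpr htk₂) hQ.le]
    _ = 2 * v ^ 2 - 2 * v * t + (t ^ 2 - 1) / 2 * (3 - k * v) := by
        linear_combination (k * v / 2 - 3 / 4) * hk

lemma I_pos_of_sq_add_sq_eq_one {v s c : ℝ} (hv : 3 * √2 / 4 < v) (h : s ^ 2 + c ^ 2 = 1) :
    0 < 2 * (v - s) * (v - c) + s * c * (1 - √2 * v) := by
  have ht : |s + c| ≤ √2 := abs_le_sqrt (by nlinarith [sq_nonneg (s - c)])
  calc 0 < 2 * v ^ 2 - 2 * v * (s + c) + ((s + c) ^ 2 - 1) / 2 * (3 - √2 * v) :=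
        quadratic_pos_of_abs_le_sqrt_two hv ht
    _ = _ := by linear_combination (3 - √2 * v) / 2 * h

theorem I_pos (v : ℝ) (hv : 3 * Real.sqrt 2 / 4 < v) :
    ∀ x ∈ Set.Ioo 0 (π/2),
      0 < 2 * (v - sin x) * (v - cos x) +
        sin x * cos x * (1 - Real.sqrt 2 * v) :=
  fun x _ => I_pos_of_sq_add_sq_eq_one hv (sin_sq_add_cos_sq x)
end
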